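/- arXiv:1105.2351 — 4 statements merged into one kernel-verified Lean document; each statement's English description precedes it below -/
import Mathlib

section
/- Define g : ℕ → ℕ by g(1) = 1 and g(n) = g(n - g(n-1)) + 1 for n ≥ 2. Then this recursion is well-defined (i.e., 1 ≤ n - g(n-1) < n for all n ≥ 2) and for all n ≥ 1, g(n) = ⌊(⌊√(8n)⌋ + 1)/2⌋. -/
set_option maxHeartbeats 1000000

private def f (n : ℕ) : ℕ := (Nat.sqrt (8 * n) + 1) / 2

private lemma f_eq (m n : ℕ) (hl : m * m < 2 * n + m) (hu : 2 * n ≤ m * m + m) :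
    f n = m := by
  have hs1 : Nat.sqrt (8 * n) < 2 * m + 1 := by
    rw [Nat.sqrt_lt]
    nlinarith
  have hs2 : 2 * m ≤ Nat.sqrt (8 * n) + 1 := by
    rcases Nat.eq_zero_or_pos m with hm | hm
    · omega
    · obtain ⟨k, rfl⟩ : ∃ k, m = k + 1 := ⟨m - 1, by omega⟩
      have : 2 * k + 1 ≤ Nat.sqrt (8 * n) := by
        rw [Nat.le_sqrt]
        nlinarith
      omega
  unfold f
  omega

private lemma f_bounds (n : ℕ) (hn : 1 ≤ n) :
    f n * f n < 2 * n + f n ∧ 2 * n ≤ f n * f n + f n := by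
  set s := Nat.sqrt (8 * n) with hs
  have h1 : s * s ≤ 8 * n := Nat.sqrt_le (8 * n)
  have h2 : 8 * n < (s + 1) * (s + 1) := Nat.lt_succ_sqrt (8 * n)
  have hs2 : 2 ≤ s := by rw [hs, Nat.le_sqrt]; omega
  have hm : f n = (s + 1) / 2 := rfl
  set m := (s + 1) / 2 with hmdef
  have hb1 : 2 * m ≤ s + 1 := by omega
  have hb2 : s + 1 ≤ 2 * m + 1 := by omega
  have hcase : s + 1 = 2 * m ∨ s + 1 = 2 * m + 1 := by omega
  rw [hm]
  constructor
  · rcases hcase with hc | hc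
    · have e1 : (s + 1) * (s + 1) = (2 * m) * (2 * m) := by rw [hc]
      have hm1 : 1 ≤ m := by omega
      nlinarith
    · have e1 : s = 2 * m := by omega
      have : (2 * m) * (2 * m) ≤ 8 * n := by rw [← e1]; exact h1
      have hm1 : 1 ≤ m := by omega
      nlinarith
  · have h3 : 8 * n < (2 * m + 1) * (2 * m + 1) := by
      calc 8 * n < (s + 1) * (s + 1) := h2
        _ ≤ (2 * m + 1) * (2 * m + 1) := Nat.mul_le_mul hb2 hb2
    have h4 : 4 * (2 * n) ≤ 4 * (m * m + m) := by nlinarith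
    exact Nat.le_of_mul_le_mul_left h4 (by norm_num)

private lemma f_range (p : ℕ) (hp : 1 ≤ p) : 1 ≤ f p ∧ f p ≤ p := by
  obtain ⟨hb1, hb2⟩ := f_bounds p hp
  set m := f p with hm
  have h1 : 1 ≤ m := by
    rcases Nat.eq_zero_or_pos m with h | h
    · rw [h] at hb2; omega
    · exact h
  refine ⟨h1, ?_⟩
  by_contra h
  push_neg at h
  have hle : p + 1 ≤ m := h
  have hm2 : 2 ≤ m := by omega
  have k1 : (p + 1) * m ≤ m * m := Nat.mul_le_mul_right m hle
  have k2 : p * 2 ≤ p * m := Nat.mul_le_mul_left p hm2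
  nlinarith

private lemma key_lemma (g : ℕ → ℕ) (h1 : g 1 = 1)
    (hrec : ∀ n, 2 ≤ n → g n = g (n - g (n - 1)) + 1) :
    ∀ n, 1 ≤ n → g n = f n := by
  intro n
  induction n using Nat.strong_induction_on with
  | _ n ih =>
    intro hn
    rcases Nat.lt_or_ge n 2 with h2 | h2
    · have : n = 1 := by omega
      subst this
      rw [h1]
      have : Nat.sqrt 8 = 2 := by
        have a1 : 2 ≤ Nat.sqrt 8 := by rw [Nat.le_sqrt]; norm_num
        have a2 : Nat.sqrt 8 < 3 := by rw [Nat.sqrt_lt]; norm_num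
        omega
      unfold f
      rw [show 8 * 1 = 8 by norm_num, this]
    · obtain ⟨p, rfl⟩ : ∃ p, n = p + 1 := ⟨n - 1, by omega⟩
      have hp : 1 ≤ p := by omega
      obtain ⟨hb1, hb2⟩ := f_bounds p hp
      obtain ⟨hr1, hr2⟩ := f_range p hp
      obtain ⟨m, hm⟩ : ∃ m, f p = m := ⟨_, rfl⟩
      rw [hm] at hb1 hb2 hr1 hr2
      have hgp : g p = m := by rw [ih p (by omega) hp, hm]
      obtain ⟨k, rfl⟩ : ∃ k, p = m + k := ⟨p - m, by omega⟩
      have hrw : g (m + k + 1) = g (k + 1) + 1 := by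
        have := hrec (m + k + 1) (by omega)
        rw [show m + k + 1 - 1 = m + k from rfl] at this
        rw [this, hgp, show m + k + 1 - m = k + 1 by omega]
      have hgk : g (k + 1) = f (k + 1) := ih (k + 1) (by omega) (by omega)
      rcases Nat.lt_or_ge (m * m + m) (2 * (m + k + 1)) with hc | hc
      · -- boundary: 2p = m*m + m, f(p+1) = m+1, f(k+1) = m
        have heven : ∃ r, m * m + m = r + r := by
          obtain ⟨r, hr⟩ := Nat.even_mul_succ_self m
          exact ⟨r, by nlinarith⟩
        obtain ⟨r, hr⟩ := heven
        have h2p : m * m + m = 2 * (m + k) := by omega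
        have hf1 : f (m + k + 1) = m + 1 := by
          apply f_eq <;> nlinarith
        have hf2 : f (k + 1) = m := by
          apply f_eq <;> nlinarith
        rw [hrw, hgk, hf2, hf1]
      · -- interior: f(p+1) = m, f(k+1) = m - 1
        have hm2 : 2 ≤ m := by
          by_contra hcon
          interval_cases m <;> omega
        obtain ⟨j, rfl⟩ : ∃ j, m = j + 1 := ⟨m - 1, by omega⟩
        have hf1 : f (j + 1 + k + 1) = j + 1 := by
          apply f_eq <;> nlinarith
        have hf2 : f (k + 1) = j := by
          apply f_eq <;> nlinarith
        rw [hrw, hgk, hf2, hf1]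

/-- Golomb's recursion g(n) = g(n - g(n-1)) + 1, g(1) = 1, is well-defined
    and has closed form g(n) = ⌊(⌊√(8n)⌋ + 1)/2⌋. -/
theorem stmt0 (g : ℕ → ℕ) (h1 : g 1 = 1)
    (hrec : ∀ n, 2 ≤ n → g n = g (n - g (n - 1)) + 1) :
    (∀ n, 2 ≤ n → 1 ≤ n - g (n - 1) ∧ n - g (n - 1) < n) ∧
    (∀ n, 1 ≤ n → g n = (Nat.sqrt (8 * n) + 1) / 2) := by
  have key := key_lemma g h1 hrec
  constructor
  · intro n hn
    have hg : g (n - 1) = f (n - 1) := key (n - 1) (by omega)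
    obtain ⟨hr1, hr2⟩ := f_range (n - 1) (by omega)
    rw [hg]
    omega
  · intro n hn
    exact key n hn
end

section
/- Define g : ℕ → ℕ by g(1) = 1 and g(n) = g(n - g(n-1)) + 1 for n ≥ 2. Then g is a step function that increases by one exactly at the indices n = k(k+1)/2 + 1 for k ≥ 1; that is, g(n+1) = g(n) + 1 if n is a triangular number k(k+1)/2 with k ≥ 1, and g(n+1) = g(n) otherwise. -/
private def T (k : ℕ) : ℕ := k * (k + 1) / 2

private lemma T_succ (k : ℕ) : T (k + 1) = T k + (k + 1) := by
  unfold T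
  have h : (k + 1) * (k + 1 + 1) = k * (k + 1) + (k + 1) * 2 := by ring
  rw [h, Nat.add_mul_div_right _ _ (by norm_num)]

private lemma T_strictMono : StrictMono T :=
  strictMono_nat_of_lt_succ fun k => by rw [T_succ]; omega

private lemma key (g : ℕ → ℕ) (h1 : g 1 = 1)
    (hrec : ∀ n, 2 ≤ n → g n = g (n - g (n - 1)) + 1) :
    ∀ n k, 1 ≤ k → T (k - 1) < n → n ≤ T k → g n = k := by
  intro n
  induction n using Nat.strong_induction_on with
  | _ n ih =>
    intro k hk hlo hhi
    rcases Nat.lt_or_ge n 2 with hn | hn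
    · -- n = 1 (n ≥ 1 since T (k-1) < n)
      have hn1 : n = 1 := by omega
      have hk1 : k = 1 := by
        by_contra h
        have hk2 : 2 ≤ k := by omega
        have : T 1 ≤ T (k - 1) := T_strictMono.monotone (by omega)
        have : T 1 = 1 := by decide
        omega
      rw [hn1, hk1, h1]
    · -- n ≥ 2, hence k ≥ 2
      have hk2 : 2 ≤ k := by
        by_contra h
        have hk1 : k = 1 := by omega
        subst hk1
        have : T 1 = 1 := by decide
        omega
      obtain ⟨j, rfl⟩ : ∃ j, k = j + 2 := ⟨k - 2, by omega⟩
      have e1 : T (j + 1) = T j + (j + 1) := T_succ j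
      have e2 : T (j + 2) = T (j + 1) + (j + 2) := T_succ (j + 1)
      have hidx : j + 2 - 1 = j + 1 := by omega
      rw [hidx] at hlo
      rcases eq_or_lt_of_le (show T (j + 1) + 1 ≤ n by omega) with heq | hlt
      · -- n = T (j+1) + 1
        have hg1 : g (n - 1) = j + 1 := by
          apply ih (n - 1) (by omega) (j + 1) (by omega)
          · simpa using show T j < n - 1 by omega
          · omega
        have := hrec n hn
        rw [hg1] at this
        have hsub : n - (j + 1) = T j + 1 := by omega
        rw [hsub] at this
        have hg2 : g (T j + 1) = j + 1 := by
          apply ih (T j + 1) (by omega) (j + 1) (by omega)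
          · simpa using show T j < T j + 1 by omega
          · omega
        omega
      · -- T (j+1) + 1 < n ≤ T (j+2)
        have hg1 : g (n - 1) = j + 2 := by
          apply ih (n - 1) (by omega) (j + 2) (by omega)
          · simpa using show T (j + 1) < n - 1 by omega
          · omega
        have := hrec n hn
        rw [hg1] at this
        have hg2 : g (n - (j + 2)) = j + 1 := by
          apply ih (n - (j + 2)) (by omega) (j + 1) (by omega)
          · simpa using show T j < n - (j + 2) by omega
          · omega
        omega

private lemma exists_band : ∀ n, 1 ≤ n → ∃ k, 1 ≤ k ∧ T (k - 1) < n ∧ n ≤ T k := by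
  intro n
  induction n with
  | zero => omega
  | succ m ihm =>
    intro _
    rcases Nat.lt_or_ge 1 (m + 1) with hm | hm
    · obtain ⟨k, hk1, hk2, hk3⟩ := ihm (by omega)
      rcases Nat.lt_or_ge m (T k) with h | h
      · exact ⟨k, hk1, by omega, by omega⟩
      · refine ⟨k + 1, by omega, ?_, ?_⟩
        · simpa using show T k < m + 1 by omega
        · have := T_succ k
          omega
    · have hm1 : m = 0 := by omega
      exact ⟨1, by omega, by subst hm1; decide, by subst hm1; decide⟩

/-- Golomb's sequence increases by one exactly at triangular indices n = k(k+1)/2, k ≥ 1. -/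
theorem stmt1 (g : ℕ → ℕ) (h1 : g 1 = 1)
    (hrec : ∀ n, 2 ≤ n → g n = g (n - g (n - 1)) + 1) :
    ∀ n, 1 ≤ n →
      ((∃ k, 1 ≤ k ∧ n = k * (k + 1) / 2) → g (n + 1) = g n + 1) ∧
      (¬ (∃ k, 1 ≤ k ∧ n = k * (k + 1) / 2) → g (n + 1) = g n) := by
  intro n hn
  obtain ⟨k, hk1, hk2, hk3⟩ := exists_band n hn
  have hgn : g n = k := key g h1 hrec n k hk1 hk2 hk3
  constructor
  · rintro ⟨m, hm1, hm2⟩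
    have hmT : n = T m := hm2
    have hmk : m = k := by
      have h1' : k - 1 < m := by
        by_contra h
        have := T_strictMono.monotone (show m ≤ k - 1 by omega)
        omega
      have h2' : m ≤ k := by
        by_contra h
        have := T_strictMono.monotone (show k + 1 ≤ m by omega)
        have := T_strictMono (show k < k + 1 by omega)
        omega
      omega
    subst hmk
    have hnk : n = T m := hmT
    have : g (n + 1) = m + 1 := by
      apply key g h1 hrec (n + 1) (m + 1) (by omega)
      · simpa using show T m < n + 1 by omega
      · have := T_succ m
        omega
    omega
  · intro hne
    have hneq : n ≠ T k := by
      intro h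
      exact hne ⟨k, hk1, h⟩
    have : g (n + 1) = k := by
      apply key g h1 hrec (n + 1) k hk1 (by omega) (by omega)
    omega
end

section
/- Let g : ℕ → ℕ be defined by g(n) = ⌊(⌊√(8n)⌋ + 1)/2⌋ for n ≥ 1. Then g(1) = 1 and for all n ≥ 2, g(n) = g(n - g(n-1)) + 1 (and in particular 1 ≤ n - g(n-1) ≤ n - 1). -/
/-- The closed form for Golomb's sequence. -/
def golomb (n : ℕ) : ℕ := (Nat.sqrt (8 * n) + 1) / 2

lemma tri_even (k : ℕ) : 2 * (k * (k+1) / 2) = k * (k+1) := by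
  have : k * (k+1) % 2 = 0 := Nat.even_iff.mp (Nat.even_mul_succ_self k)
  omega

lemma golomb_eq (k n : ℕ) (h1 : k*(k+1)/2 < n) (h2 : n ≤ (k+1)*(k+2)/2) :
    golomb n = k+1 := by
  have e1 : 2 * (k * (k+1) / 2) = k * (k+1) := tri_even k
  have e2 : 2 * ((k+1) * (k+2) / 2) = (k+1) * (k+2) := tri_even (k+1)
  have hs1 : 2*k+1 ≤ Nat.sqrt (8*n) := Nat.le_sqrt.mpr (by nlinarith)
  have hs2 : Nat.sqrt (8*n) < 2*k+3 := Nat.sqrt_lt.mpr (by nlinarith)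
  unfold golomb
  omega

lemma golomb_spec (n : ℕ) (h : 1 ≤ n) :
    ∃ k, k*(k+1)/2 < n ∧ n ≤ (k+1)*(k+2)/2 := by
  induction n with
  | zero => omega
  | succ n ih =>
    rcases Nat.eq_zero_or_pos n with rfl | hn
    · exact ⟨0, by norm_num⟩
    · obtain ⟨k, h1, h2⟩ := ih hn
      by_cases h3 : n + 1 ≤ (k+1)*(k+2)/2
      · exact ⟨k, by omega, h3⟩
      · have e2 : 2 * ((k+1) * (k+2) / 2) = (k+1) * (k+2) := tri_even (k+1)
        have e3 : 2 * ((k+2) * (k+3) / 2) = (k+2) * (k+3) := tri_even (k+2)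
        have hr : (k+2)*(k+3) = (k+1)*(k+2) + 2*(k+2) := by ring
        exact ⟨k+1, show (k+1)*(k+2)/2 < n+1 by omega, show n+1 ≤ (k+2)*(k+3)/2 by omega⟩

/-- The closed form g(n) = ⌊(⌊√(8n)⌋+1)/2⌋ satisfies Golomb's recursion. -/
theorem stmt14 :
    golomb 1 = 1 ∧
    ∀ n, 2 ≤ n →
      (1 ≤ n - golomb (n - 1) ∧ n - golomb (n - 1) ≤ n - 1) ∧
      golomb n = golomb (n - golomb (n - 1)) + 1 := by
  constructor
  · exact golomb_eq 0 1 (by norm_num) (by norm_num)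
  intro n hn
  obtain ⟨k, h1, h2⟩ := golomb_spec n (by omega)
  have hk : 1 ≤ k := by
    by_contra h
    push_neg at h
    interval_cases k
    norm_num at h2
    omega
  obtain ⟨j, rfl⟩ : ∃ j, k = j + 1 := ⟨k - 1, by omega⟩
  replace h1 : (j+1)*(j+2)/2 < n := h1
  replace h2 : n ≤ (j+2)*(j+3)/2 := h2
  have ej : 2 * (j * (j+1) / 2) = j * (j+1) := tri_even j
  have ej1 : 2 * ((j+1) * (j+2) / 2) = (j+1) * (j+2) := tri_even (j+1)
  have ej2 : 2 * ((j+2) * (j+3) / 2) = (j+2) * (j+3) := tri_even (j+2)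
  have r1 : (j+1)*(j+2) = j*(j+1) + 2*(j+1) := by ring
  have r2 : (j+2)*(j+3) = (j+1)*(j+2) + 2*(j+2) := by ring
  have hgn : golomb n = (j+1)+1 := golomb_eq (j+1) n h1 h2
  by_cases hc : n = (j+1)*(j+2)/2 + 1
  · have hg1 : golomb (n-1) = j+1 :=
      golomb_eq j (n-1) (show j*(j+1)/2 < n-1 by omega) (show n-1 ≤ (j+1)*(j+2)/2 by omega)
    have hg2 : golomb (n - (j+1)) = j+1 :=
      golomb_eq j (n - (j+1)) (show j*(j+1)/2 < n-(j+1) by omega)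
        (show n-(j+1) ≤ (j+1)*(j+2)/2 by omega)
    rw [hg1]
    refine ⟨⟨by omega, by omega⟩, by omega⟩
  · have hg1 : golomb (n-1) = j+2 :=
      golomb_eq (j+1) (n-1) (show (j+1)*(j+2)/2 < n-1 by omega)
        (show n-1 ≤ (j+2)*(j+3)/2 by omega)
    have hg2 : golomb (n - (j+2)) = j+1 :=
      golomb_eq j (n - (j+2)) (show j*(j+1)/2 < n-(j+2) by omega)
        (show n-(j+2) ≤ (j+1)*(j+2)/2 by omega)
    rw [hg1]
    refine ⟨⟨by omega, by omega⟩, by omega⟩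
end

section
/- Let F(m) = ν₂(2m) for m ≥ 1. Let F_1* = [1], and for i ≥ 1 let F_{i+1}* = interleave(map (+1) F_i*, repeat 1), i.e. F_{i+1}* is the list whose (2t-1)-th entry is F_i*(t) + 1 and whose (2t)-th entry is 1. Then the concatenation F_1* ++ F_2* ++ F_3* ++ ⋯ equals the sequence (ν₂(2m))_{m ≥ 1}. -/
/-- The self-similar blocks: Fstar 0 = F₁* = [1], and
    F_{i+1}* is obtained from F_i* by replacing each entry a by the pair (a+1, 1). -/
def Fstar : ℕ → List ℕ
  | 0 => [1]
  | i + 1 => (Fstar i).flatMap (fun a => [a + 1, 1])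

lemma range'_double : ∀ (n s : ℕ),
    List.range' (2 * s) (2 * n) = (List.range' s n).flatMap (fun m => [2 * m, 2 * m + 1]) := by
  intro n
  induction n with
  | zero => intro s; simp
  | succ n ih =>
    intro s
    have h2 : 2 * (n + 1) = (2 * n) + 1 + 1 := by ring
    rw [h2, List.range'_succ, List.range'_succ, show 2 * s + 1 + 1 = 2 * (s + 1) by ring,
      ih (s + 1), List.range'_succ]
    simp [List.flatMap_cons]

lemma val_two_mul (m : ℕ) (hm : 1 ≤ m) :
    padicValNat 2 (2 * m) = padicValNat 2 m + 1 := by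
  rw [padicValNat.mul (by norm_num) (by omega), padicValNat.self (by norm_num)]
  ring

lemma val_odd (m : ℕ) : padicValNat 2 (2 * m + 1) = 0 := by
  apply padicValNat.eq_zero_of_not_dvd
  omega

lemma fstar_eq : ∀ i, Fstar i =
    (List.range' (2 ^ i) (2 ^ i)).map (fun m => padicValNat 2 (2 * m)) := by
  intro i
  induction i with
  | zero =>
    simp [Fstar, List.range', val_two_mul 1 le_rfl]
  | succ i ih =>
    have hpow : (2 : ℕ) ^ (i + 1) = 2 * 2 ^ i := by ring
    rw [Fstar, ih, hpow, range'_double, List.flatMap_map, List.map_flatMap]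
    apply List.flatMap_congr
    intro m hm
    have h0 : 2 ^ i ≤ m := (List.mem_range'_1.mp hm).1
    have h1 : 1 ≤ m := le_trans Nat.one_le_two_pow h0
    simp only [List.map_cons, List.map_nil]
    rw [val_two_mul (2 * m) (by omega), val_two_mul m h1,
      val_two_mul (2 * m + 1) (by omega), val_odd]

/-- The concatenation F₁* ++ F₂* ++ ⋯ equals the sequence (ν₂(2m))_{m ≥ 1}:
    the first N blocks concatenate to the values for m = 1, …, 2^N − 1. -/
theorem stmt15 : ∀ N : ℕ,
    ((List.range N).map Fstar).flatten =
      (List.range' 1 (2 ^ N - 1)).map (fun m => padicValNat 2 (2 * m)) := by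
  intro N
  induction N with
  | zero => simp
  | succ N ih =>
    rw [List.range_succ, List.map_append, List.flatten_append, ih]
    simp only [List.map_cons, List.map_nil, List.flatten_cons, List.flatten_nil, List.append_nil]
    rw [fstar_eq]
    have h1 : (1:ℕ) ≤ 2 ^ N := Nat.one_le_two_pow
    have hsum : 2 ^ (N + 1) - 1 = (2 ^ N - 1) + 2 ^ N := by
      have : (2:ℕ) ^ (N + 1) = 2 ^ N + 2 ^ N := by ring
      omega
    rw [hsum, ← List.range'_append_1 (s := 1) (m := 2 ^ N - 1) (n := 2 ^ N),
      show 1 + (2 ^ N - 1) = 2 ^ N by omega, List.map_append]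
end
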